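/- arXiv:2305.10537 — 5 statements merged into one kernel-verified Lean document; each statement's English description precedes it below -/
import Mathlib

section
/- Let (λ_n)_{n∈ℕ} be a nondecreasing sequence of nonnegative real numbers with λ_0 = 0, λ_n → ∞, and Σ_n 1/(1+λ_n) < ∞. Define f(x) = Σ_n 1/(λ_n − x) for real x not equal to any λ_n. Then f(x) > 0 for all x < 0, and for every n with λ_n < λ_{n+1} there exists exactly one x ∈ (λ_n, λ_{n+1}) with f(x) = 0. -/
open Set Filter

private lemma aux_nonneg (a : ℕ → ℝ) (hmono : Monotone a) (h0 : a 0 = 0) (m : ℕ) :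
    0 ≤ a m := by
  rw [← h0]; exact hmono (Nat.zero_le m)

private lemma aux_summable (a : ℕ → ℝ) (hmono : Monotone a) (h0 : a 0 = 0)
    (htop : Tendsto a atTop atTop)
    (hsum : Summable fun n => 1 / (1 + a n)) (x : ℝ) :
    Summable fun m => 1 / (a m - x) := by
  obtain ⟨N, hN⟩ := eventually_atTop.mp (htop.eventually_ge_atTop (x + 1))
  rw [← summable_nat_add_iff N]
  have hb : Summable fun m => (1 + |1 + x|) * (1 / (1 + a (m + N))) :=
    ((summable_nat_add_iff N).mpr hsum).mul_left _
  refine Summable.of_nonneg_of_le (fun m => ?_) (fun m => ?_) hb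
  · have h1 : x + 1 ≤ a (m + N) := hN _ (Nat.le_add_left N m)
    have h3 : (0:ℝ) < a (m + N) - x := by linarith
    positivity
  · have h1 : x + 1 ≤ a (m + N) := hN _ (Nat.le_add_left N m)
    have h2 : (0:ℝ) ≤ a (m + N) := aux_nonneg a hmono h0 _
    have h3 : (0:ℝ) < a (m + N) - x := by linarith
    have h4 : (0:ℝ) < 1 + a (m + N) := by linarith
    rw [mul_one_div, div_le_div_iff₀ h3 h4]
    nlinarith [le_abs_self (1 + x), abs_nonneg (1 + x),
      mul_nonneg (abs_nonneg (1 + x)) (by linarith : (0:ℝ) ≤ a (m + N) - x - 1)]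

private lemma aux_mono (a : ℕ → ℝ) (hmono : Monotone a) {n : ℕ} {x y : ℝ}
    (hx : a n < x) (hy : y < a (n + 1)) (hxy : x ≤ y) (m : ℕ) :
    1 / (a m - x) ≤ 1 / (a m - y) := by
  rcases le_or_gt m n with hm | hm
  · have h1 : a m ≤ a n := hmono hm
    exact one_div_le_one_div_of_neg_of_le (by linarith) (by linarith)
  · have h1 : a (n + 1) ≤ a m := hmono hm
    exact one_div_le_one_div_of_le (by linarith) (by linarith)

private lemma aux_strict (a : ℕ → ℝ) (hmono : Monotone a) (h0 : a 0 = 0)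
    (htop : Tendsto a atTop atTop)
    (hsum : Summable fun n => 1 / (1 + a n)) {n : ℕ} {x y : ℝ}
    (hx : a n < x) (hy : y < a (n + 1)) (hxy : x < y) :
    ∑' m, 1 / (a m - x) < ∑' m, 1 / (a m - y) := by
  have h0n : (0:ℝ) ≤ a n := aux_nonneg a hmono h0 n
  refine Summable.tsum_lt_tsum (aux_mono a hmono hx hy hxy.le)
    (i := 0) ?_ (aux_summable a hmono h0 htop hsum x) (aux_summable a hmono h0 htop hsum y)
  have : a 0 - x < 0 := by rw [h0]; linarith
  exact one_div_lt_one_div_of_neg_of_lt this (by linarith)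

private lemma aux_cont (a : ℕ → ℝ) (hmono : Monotone a) (h0 : a 0 = 0)
    (hsum : Summable fun n => 1 / (1 + a n)) {n : ℕ} {x₁ x₂ : ℝ}
    (h1 : a n < x₁) (h2 : x₂ < a (n + 1)) :
    ContinuousOn (fun x => ∑' m, 1 / (a m - x)) (Icc x₁ x₂) := by
  have h0n : (0:ℝ) ≤ a n := aux_nonneg a hmono h0 n
  set K₁ : ℝ := (1 + a n) / (x₁ - a n) with hK₁
  set K₂ : ℝ := (1 + a (n + 1)) / (a (n + 1) - x₂) with hK₂
  set C : ℝ := max K₁ K₂ with hC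
  refine continuousOn_tsum (u := fun m => C * (1 / (1 + a m))) (fun m => ?_)
    (hsum.mul_left C) (fun m x hx => ?_)
  · -- continuity of each term
    refine ContinuousOn.div continuousOn_const
      ((continuous_const.sub continuous_id).continuousOn) (fun x hx => ?_)
    rcases le_or_gt m n with hm | hm
    · have : a m ≤ a n := hmono hm
      have : a m - x < 0 := by
        have := hx.1; linarith
      exact ne_of_lt this
    · have : a (n + 1) ≤ a m := hmono hm
      have : 0 < a m - x := by
        have := hx.2; linarith
      exact ne_of_gt this
  · -- the bound
    have hx1 := hx.1
    have hx2 := hx.2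
    show ‖1 / (a m - x)‖ ≤ C * (1 / (1 + a m))
    have ham : (0:ℝ) ≤ a m := aux_nonneg a hmono h0 m
    have hpm : (0:ℝ) < 1 + a m := by linarith
    have hK₁pos : 0 < K₁ := by
      apply div_pos <;> linarith
    have hCpos : 0 < C := lt_of_lt_of_le hK₁pos (le_max_left _ _)
    rw [Real.norm_eq_abs, abs_div, abs_one, mul_one_div,
      div_le_div_iff₀ (abs_pos.mpr ?_) hpm]
    · rcases le_or_gt m n with hm | hm
      · have hmn : a m ≤ a n := hmono hm
        have habs : |a m - x| = x - a m := by
          rw [abs_of_neg (by linarith)]; ring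
        have hKC : K₁ ≤ C := le_max_left _ _
        have hKval : K₁ * (x₁ - a n) = 1 + a n :=
          div_mul_cancel₀ _ (by linarith)
        nlinarith [mul_le_mul_of_nonneg_right hKC (abs_nonneg (a m - x)),
          mul_le_mul_of_nonneg_left (by linarith : x₁ - a n ≤ |a m - x|) hK₁pos.le]
      · have hmn : a (n + 1) ≤ a m := hmono hm
        have hd : (0:ℝ) < a (n + 1) - x₂ := by linarith
        have habs : |a m - x| = a m - x := abs_of_pos (by linarith)
        have hKC : K₂ ≤ C := le_max_right _ _
        have key : 1 + a m ≤ K₂ * (a m - x) := by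
          rw [hK₂, div_mul_eq_mul_div, le_div_iff₀ hd]
          nlinarith [mul_nonneg (by linarith : (0:ℝ) ≤ a m - a (n + 1))
            (by linarith : (0:ℝ) ≤ 1 + x₂)]
        calc 1 * (1 + a m) = 1 + a m := by ring
          _ ≤ K₂ * (a m - x) := key
          _ ≤ C * |a m - x| := by
              rw [habs]
              exact mul_le_mul_of_nonneg_right hKC (by linarith)
    · rcases le_or_gt m n with hm | hm
      · have : a m ≤ a n := hmono hm
        exact ne_of_lt (by linarith)
      · have : a (n + 1) ≤ a m := hmono hm
        exact ne_of_gt (by linarith)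

theorem stmt_1 (a : ℕ → ℝ) (hmono : Monotone a) (h0 : a 0 = 0)
    (htop : Filter.Tendsto a Filter.atTop Filter.atTop)
    (hsum : Summable fun n => 1 / (1 + a n)) :
    (∀ x : ℝ, x < 0 → 0 < ∑' n, 1 / (a n - x)) ∧
      ∀ n : ℕ, a n < a (n + 1) →
        ∃! x : ℝ, x ∈ Set.Ioo (a n) (a (n + 1)) ∧ ∑' m, 1 / (a m - x) = 0 := by
  have hnn := aux_nonneg a hmono h0
  have hS := aux_summable a hmono h0 htop hsum
  constructor
  · intro x hx
    refine Summable.tsum_pos (hS x) (fun m => ?_) 0 ?_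
    · have : (0:ℝ) < a m - x := by have := hnn m; linarith
      positivity
    · have : (0:ℝ) < a 0 - x := by rw [h0]; linarith
      positivity
  · intro n hn
    set f : ℝ → ℝ := fun x => ∑' m, 1 / (a m - x) with hf
    set c : ℝ := (a n + a (n + 1)) / 2 with hc
    have hc1 : a n < c := by rw [hc]; linarith
    have hc2 : c < a (n + 1) := by rw [hc]; linarith
    have hStail : ∀ x : ℝ, Summable fun m => 1 / (a (m + (n + 1)) - x) :=
      fun x => (summable_nat_add_iff (f := fun m => 1 / (a m - x)) (n + 1)).mpr (hS x)
    -- upper bound for f on (a n, c]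
    set B : ℝ := ∑' m, 1 / (a (m + (n + 1)) - c) with hB
    have hBnn : 0 ≤ B := tsum_nonneg (fun m => by
      have : a (n + 1) ≤ a (m + (n + 1)) := hmono (Nat.le_add_left _ _)
      have : (0:ℝ) < a (m + (n + 1)) - c := by linarith
      positivity)
    have hub : ∀ x : ℝ, a n < x → x ≤ c → f x ≤ 1 / (a n - x) + B := by
      intro x hx1 hx2
      have hsplit := Summable.sum_add_tsum_nat_add (n + 1) (hS x)
      have htail : (∑' m, 1 / (a (m + (n + 1)) - x)) ≤ B := by
        refine Summable.tsum_le_tsum (fun m => ?_) (hStail x) (hStail c)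
        have h1 : a (n + 1) ≤ a (m + (n + 1)) := hmono (Nat.le_add_left _ _)
        exact one_div_le_one_div_of_le (by linarith) (by linarith)
      have hfin : (∑ m ∈ Finset.range (n + 1), 1 / (a m - x)) ≤ 1 / (a n - x) := by
        rw [Finset.sum_range_succ]
        have : (∑ m ∈ Finset.range n, 1 / (a m - x)) ≤ 0 := by
          refine Finset.sum_nonpos (fun m hm => ?_)
          have : a m ≤ a n := hmono (le_of_lt (Finset.mem_range.mp hm))
          exact le_of_lt (one_div_neg.mpr (by linarith))
        linarith
      rw [hf]
      calc (∑' m, 1 / (a m - x))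
          = (∑ m ∈ Finset.range (n + 1), 1 / (a m - x))
            + ∑' m, 1 / (a (m + (n + 1)) - x) := hsplit.symm
        _ ≤ 1 / (a n - x) + B := add_le_add hfin htail
    -- lower bound for f on [c, a (n+1))
    set B' : ℝ := (n + 1 : ℝ) * (1 / (c - a n)) with hB'
    have hB'nn : 0 ≤ B' := by
      have : (0:ℝ) < c - a n := by linarith
      positivity
    have hlb : ∀ x : ℝ, c ≤ x → x < a (n + 1) → 1 / (a (n + 1) - x) - B' ≤ f x := by
      intro x hx1 hx2
      have hsplit := Summable.sum_add_tsum_nat_add (n + 1) (hS x)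
      have htail : 1 / (a (n + 1) - x) ≤ ∑' m, 1 / (a (m + (n + 1)) - x) := by
        have := Summable.le_tsum (hStail x) 0 (fun j _ => by
          have h1 : a (n + 1) ≤ a (j + (n + 1)) := hmono (Nat.le_add_left _ _)
          have : (0:ℝ) < a (j + (n + 1)) - x := by linarith
          positivity)
        simpa using this
      have hfin : -B' ≤ ∑ m ∈ Finset.range (n + 1), 1 / (a m - x) := by
        have hcard : ∀ m ∈ Finset.range (n + 1), -(1 / (c - a n)) ≤ 1 / (a m - x) := by
          intro m hm
          have h1 : a m ≤ a n := hmono (Nat.lt_succ_iff.mp (Finset.mem_range.mp hm))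
          have h2 : (0:ℝ) < c - a n := by linarith
          have h3 : c - a n ≤ x - a m := by linarith
          have h4 : 1 / (x - a m) ≤ 1 / (c - a n) := one_div_le_one_div_of_le h2 h3
          have : 1 / (a m - x) = -(1 / (x - a m)) := by
            rw [← one_div_neg_eq_neg_one_div]; ring_nf
          rw [this]; linarith
        have := Finset.card_nsmul_le_sum (Finset.range (n + 1)) _ _ hcard
        rw [Finset.card_range, nsmul_eq_mul] at this
        rw [hB']
        push_cast at this ⊢
        linarith
      rw [hf]
      calc 1 / (a (n + 1) - x) - B'
          ≤ (∑ m ∈ Finset.range (n + 1), 1 / (a m - x))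
            + ∑' m, 1 / (a (m + (n + 1)) - x) := by linarith
        _ = ∑' m, 1 / (a m - x) := hsplit
    -- choose the negative point x₁
    set ε₁ : ℝ := min (c - a n) (1 / (B + 1)) with hε₁
    have hε₁pos : 0 < ε₁ := lt_min (by linarith) (by positivity)
    set x₁ : ℝ := a n + ε₁ with hx₁
    have hx₁l : a n < x₁ := by rw [hx₁]; linarith
    have hx₁c : x₁ ≤ c := by
      have := min_le_left (c - a n) (1 / (B + 1)); rw [hx₁]; linarith
    have hx₁r : x₁ < a (n + 1) := lt_of_le_of_lt hx₁c hc2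
    have hfx₁ : f x₁ < 0 := by
      have h5 := hub x₁ hx₁l hx₁c
      have h6 : ε₁ ≤ 1 / (B + 1) := min_le_right _ _
      have h7 : B + 1 ≤ 1 / ε₁ := by
        have := one_div_le_one_div_of_le hε₁pos h6
        rwa [one_div_one_div] at this
      have h8 : 1 / (a n - x₁) = -(1 / ε₁) := by
        rw [hx₁]
        rw [show a n - (a n + ε₁) = -ε₁ by ring, one_div_neg_eq_neg_one_div]
      rw [h8] at h5
      linarith
    -- choose the positive point x₂
    set ε₂ : ℝ := min (a (n + 1) - c) (1 / (B' + 1)) with hε₂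
    have hε₂pos : 0 < ε₂ := lt_min (by linarith) (by positivity)
    set x₂ : ℝ := a (n + 1) - ε₂ with hx₂
    have hx₂r : x₂ < a (n + 1) := by rw [hx₂]; linarith
    have hx₂c : c ≤ x₂ := by
      have := min_le_left (a (n + 1) - c) (1 / (B' + 1)); rw [hx₂]; linarith
    have hx₂l : a n < x₂ := lt_of_lt_of_le hc1 hx₂c
    have hfx₂ : 0 < f x₂ := by
      have h5 := hlb x₂ hx₂c hx₂r
      have h6 : ε₂ ≤ 1 / (B' + 1) := min_le_right _ _
      have h7 : B' + 1 ≤ 1 / ε₂ := by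
        have := one_div_le_one_div_of_le hε₂pos h6
        rwa [one_div_one_div] at this
      have h8 : 1 / (a (n + 1) - x₂) = 1 / ε₂ := by
        rw [hx₂, show a (n + 1) - (a (n + 1) - ε₂) = ε₂ by ring]
      rw [h8] at h5
      linarith
    -- x₁ < x₂
    have hx₁x₂ : x₁ < x₂ := by
      rcases lt_trichotomy x₁ x₂ with h | h | h
      · exact h
      · exfalso; rw [h] at hfx₁; linarith
      · exfalso
        have := aux_strict a hmono h0 htop hsum hx₂l hx₁r h
        linarith
    -- IVT
    have hcont : ContinuousOn f (Icc x₁ x₂) := aux_cont a hmono h0 hsum hx₁l hx₂r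
    have hmem : (0:ℝ) ∈ Icc (f x₁) (f x₂) := ⟨le_of_lt hfx₁, le_of_lt hfx₂⟩
    obtain ⟨x, hxmem, hfx⟩ := intermediate_value_Icc hx₁x₂.le hcont hmem
    refine ⟨x, ⟨⟨lt_of_lt_of_le hx₁l hxmem.1, lt_of_le_of_lt hxmem.2 hx₂r⟩, hfx⟩, ?_⟩
    intro y ⟨hymem, hfy⟩
    have hxIoo : x ∈ Set.Ioo (a n) (a (n + 1)) :=
      ⟨lt_of_lt_of_le hx₁l hxmem.1, lt_of_le_of_lt hxmem.2 hx₂r⟩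
    have hx0 : (∑' m, 1 / (a m - x)) = 0 := hfx
    rcases lt_trichotomy y x with h | h | h
    · exfalso
      have := aux_strict a hmono h0 htop hsum hymem.1 hxIoo.2 h
      rw [hfy, hx0] at this
      exact lt_irrefl 0 this
    · exact h
    · exfalso
      have := aux_strict a hmono h0 htop hsum hxIoo.1 hymem.2 h
      rw [hfy, hx0] at this
      exact lt_irrefl 0 this
end

section
/- Let α ∈ ℝ and let λ ∈ ℂ satisfy λ ≠ (α + 2πm)² for every m ∈ ℤ. Then c(λ) ≠ cos(α), the doubly infinite series Σ_{m∈ℤ} 1/((α + 2πm)² − λ) converges absolutely, and Σ_{m∈ℤ} 1/((α + 2πm)² − λ) = (s(λ)/2) · 1/(c(λ) − cos α). -/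
/-- `c(λ) = cos ω` where `ω` is a complex square root of `λ`
(independent of the choice of square root). -/
noncomputable def cf (z : ℂ) : ℂ := Complex.cos (z ^ ((1 : ℂ) / 2))

/-- `s(λ) = sin(ω)/ω` where `ω` is a complex square root of `λ`
(independent of the choice of square root), with `s(0) = 1`. -/
noncomputable def sf (z : ℂ) : ℂ :=
  if z = 0 then 1 else Complex.sin (z ^ ((1 : ℂ) / 2)) / z ^ ((1 : ℂ) / 2)

/-!
Write `λ = ω²`. From the solutions `cos (ω t)` and `sin (ω t) / ω` of `y'' = -λ y` one builds,
as soon as `c(λ) ≠ cos α`, a solution `g` with `e^{-iα} g 1 = g 0` and `e^{-iα} g' 1 - g' 0 = 1`.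
Then `f t = e^{-iαt} g t` is continuous on `ℝ/ℤ`, and two integrations by parts show that its
`m`-th Fourier coefficient is `1 / ((α + 2πm)² - λ)`. These coefficients are absolutely summable,
so the Fourier series of `f` converges at `0` to `g 0 = s(λ) / (2 (c(λ) - cos α))`.
-/

open Complex
open scoped Real

theorem norm_one_div_sq_sub_le {x : ℝ} {z : ℂ} (h : 2 * ‖z‖ < x ^ 2) :
    ‖1 / ((x : ℂ) ^ 2 - z)‖ ≤ 2 / x ^ 2 := by
  have hx2 : 0 < x ^ 2 := by linarith [norm_nonneg z]
  have hden : x ^ 2 / 2 ≤ ‖(x : ℂ) ^ 2 - z‖ := by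
    have hnorm : ‖(x : ℂ) ^ 2‖ = x ^ 2 := by rw [norm_pow, norm_real, Real.norm_eq_abs, sq_abs]
    linarith [norm_sub_norm_le ((x : ℂ) ^ 2) z]
  rw [norm_div, norm_one]
  exact (one_div_le_one_div_of_le (by positivity) hden).trans_eq (one_div_div _ _)

theorem summable_norm_one_div_sq_sub (a p : ℝ) (hp : p ≠ 0) (z : ℂ) :
    Summable fun m : ℤ => ‖1 / (((a + p * m : ℝ) : ℂ) ^ 2 - z)‖ := by
  have hR := (tendsto_norm_cocompact_atTop.comp Int.tendsto_coe_cofinite).eventually_ge_atTop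
    ((2 * |a| + 8 * ‖z‖ + 1) / |p|)
  refine Summable.of_norm_bounded_eventually
    ((Real.summable_one_div_int_pow.mpr one_lt_two).mul_left (8 / p ^ 2)) ?_
  filter_upwards [hR] with m (hm : (2 * |a| + 8 * ‖z‖ + 1) / |p| ≤ |(m : ℝ)|)
  have hy : 2 * |a| + 8 * ‖z‖ + 1 ≤ |p * m| := by
    rwa [abs_mul, ← div_le_iff₀' (abs_pos.mpr hp)]
  have hx : |p * m| ≤ 2 * |a + p * m| := by
    have := abs_add_le (a + p * m) (-a)
    rw [show a + p * m + -a = p * m by ring, abs_neg] at this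
    linarith [norm_nonneg z]
  have hsq : (p * m) ^ 2 ≤ 4 * (a + p * m) ^ 2 := by
    nlinarith [sq_abs (p * m), sq_abs (a + p * m), abs_nonneg (p * m)]
  have hle_sq : |p * m| ≤ (p * m) ^ 2 := by
    nlinarith [sq_abs (p * m), norm_nonneg z, abs_nonneg a]
  rw [norm_norm]
  calc ‖1 / (((a + p * m : ℝ) : ℂ) ^ 2 - z)‖ ≤ 2 / (a + p * m) ^ 2 :=
        norm_one_div_sq_sub_le (by linarith [abs_nonneg a])
    _ ≤ 8 / (p * m) ^ 2 := by
        rw [div_le_div_iff₀ (by linarith [abs_nonneg a, norm_nonneg z])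
          (by linarith [abs_nonneg a, norm_nonneg z])]
        linarith
    _ = 8 / p ^ 2 * (1 / (m : ℝ) ^ 2) := by rw [mul_pow]; field_simp

-- The solution of `y'' = -ω² y`, `y 0 = 0`, `y' 0 = 1`, for every `ω` including `ω = 0`.
noncomputable def sinDiv (ω : ℂ) (t : ℝ) : ℂ := if ω = 0 then t else sin (ω * t) / ω

theorem sinDiv_zero_right (ω : ℂ) : sinDiv ω 0 = 0 := by
  simp [sinDiv]

theorem mul_sinDiv (ω : ℂ) (t : ℝ) : ω * sinDiv ω t = sin (ω * t) := by
  rcases eq_or_ne ω 0 with rfl | hω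
  · simp
  · rw [sinDiv, if_neg hω, mul_div_cancel₀ _ hω]

theorem hasDerivAt_sinDiv (ω : ℂ) (t : ℝ) : HasDerivAt (sinDiv ω) (cos (ω * t)) t := by
  rcases eq_or_ne ω 0 with rfl | hω
  · have hsinDiv : sinDiv 0 = fun t : ℝ => (t : ℂ) := funext fun t => if_pos rfl
    simpa [hsinDiv] using (hasDerivAt_id t).ofReal_comp
  · have hsinDiv : sinDiv ω = fun t : ℝ => sin (ω * t) / ω := funext fun t => if_neg hω
    rw [hsinDiv]
    simpa [hω] using (((hasDerivAt_id (t : ℂ)).const_mul ω).csin.div_const ω).comp_ofReal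

theorem hasDerivAt_cos_mul (ω : ℂ) (t : ℝ) :
    HasDerivAt (fun t : ℝ => cos (ω * t)) (-ω ^ 2 * sinDiv ω t) t := by
  have := ((hasDerivAt_id (t : ℂ)).const_mul ω).ccos.comp_ofReal
  simp only [id, mul_one] at this
  refine this.congr_deriv ?_
  linear_combination ω * mul_sinDiv ω t

theorem cos_ne_cos_of_forall_sq_ne {ω : ℂ} {α : ℝ}
    (h : ∀ m : ℤ, ω ^ 2 ≠ ((α + 2 * π * m : ℝ) : ℂ) ^ 2) : cos ω ≠ cos α := by
  rintro hcos
  obtain ⟨k, hk | hk⟩ := cos_eq_cos_iff.mp hcos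
  · refine h (-k) ?_
    push_cast
    linear_combination (-(ω + α - 2 * π * k)) * hk
  · refine h (-k) ?_
    push_cast
    linear_combination (ω - α + 2 * π * k) * hk

theorem exists_twisted_boundary_solution (ω : ℂ) (α : ℝ) (hc : cos ω ≠ cos α) :
    ∃ g g' : ℝ → ℂ, (∀ t, HasDerivAt g (g' t) t) ∧ (∀ t, HasDerivAt g' (-ω ^ 2 * g t) t) ∧
      exp (-(α * I)) * g 1 = g 0 ∧ exp (-(α * I)) * g' 1 - g' 0 = 1 ∧
      g 0 = sinDiv ω 1 / (2 * (cos ω - cos α)) := by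
  set c := cos ω
  set s := sinDiv ω 1
  set e := exp (α * I)
  have hD : 2 * (c - cos α) ≠ 0 := mul_ne_zero two_ne_zero (sub_ne_zero.mpr hc)
  have he : exp (-(α * I)) * e = 1 := by rw [← exp_add]; simp
  have hcos : 2 * cos α = e + exp (-(α * I)) := by rw [cos, neg_mul]; ring
  have hwronski : c ^ 2 + ω ^ 2 * s ^ 2 = 1 := by
    have hs : ω * s = sin ω := by simpa using mul_sinDiv ω 1
    linear_combination sin_sq_add_cos_sq ω + (ω * s + sin ω) * hs
  refine ⟨fun t => (s * cos (ω * t) + (e - c) * sinDiv ω t) / (2 * (c - cos α)),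
    fun t => (s * (-ω ^ 2 * sinDiv ω t) + (e - c) * cos (ω * t)) / (2 * (c - cos α)),
    fun t => ?_, fun t => ?_, ?_, ?_, ?_⟩
  · exact (((hasDerivAt_cos_mul ω t).const_mul s).add
      ((hasDerivAt_sinDiv ω t).const_mul (e - c))).div_const _
  · refine ((((hasDerivAt_sinDiv ω t).const_mul (-ω ^ 2)).const_mul s).add
      ((hasDerivAt_cos_mul ω t).const_mul (e - c))).div_const _ |>.congr_deriv ?_
    ring
  · simp only [ofReal_one, mul_one, sinDiv_zero_right, ofReal_zero, mul_zero, cos_zero]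
    field_simp
    linear_combination s * he
  · simp only [ofReal_one, mul_one, sinDiv_zero_right, ofReal_zero, mul_zero, cos_zero]
    field_simp
    linear_combination (-exp (-(α * I))) * hwronski + c * he + hcos
  · simp [sinDiv_zero_right]

theorem integral_mul_exp_of_hasDerivAt {g g' : ℝ → ℂ} {z k : ℂ}
    (hg : ∀ t, HasDerivAt g (g' t) t) (hg' : ∀ t, HasDerivAt g' (-z * g t) t)
    (hk : k ^ 2 ≠ z) (a b : ℝ) :
    ∫ t in a..b, g t * exp (-(k * I * t)) =
      ((g' b + I * k * g b) * exp (-(k * I * b)) - (g' a + I * k * g a) * exp (-(k * I * a)))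
        / (k ^ 2 - z) := by
  have hexp (t : ℝ) : HasDerivAt (fun t : ℝ => exp (-(k * I * t)))
      (-(k * I) * exp (-(k * I * t))) t := by
    simpa [mul_comm] using ((hasDerivAt_id (t : ℂ)).const_mul (-(k * I))).cexp.comp_ofReal
  have hanti (t : ℝ) : HasDerivAt
      (fun t => (g' t + I * k * g t) * exp (-(k * I * t)) / (k ^ 2 - z))
      (g t * exp (-(k * I * t))) t := by
    have hsum : HasDerivAt (fun t => g' t + I * k * g t) (-z * g t + I * k * g' t) t :=
      (hg' t).add ((hg t).const_mul (I * k))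
    refine ((hsum.mul (hexp t)).div_const _).congr_deriv ?_
    rw [div_eq_iff (sub_ne_zero.mpr hk)]
    linear_combination (-(g t * exp (-(k * I * t)) * k ^ 2)) * I_sq
  have hcont : Continuous g := continuous_iff_continuousAt.mpr fun t => (hg t).continuousAt
  rw [intervalIntegral.integral_eq_sub_of_hasDerivAt (fun t _ => hanti t)
    ((hcont.mul (by fun_prop)).intervalIntegrable a b), sub_div]

theorem integral_exp_mul_exp_mul_of_twisted_boundary {g g' : ℝ → ℂ} {z : ℂ} {α : ℝ}
    (hg : ∀ t, HasDerivAt g (g' t) t) (hg' : ∀ t, HasDerivAt g' (-z * g t) t)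
    (hg1 : exp (-(α * I)) * g 1 = g 0) (hg'1 : exp (-(α * I)) * g' 1 - g' 0 = 1)
    {m : ℤ} (hm : ((α + 2 * π * m : ℝ) : ℂ) ^ 2 ≠ z) :
    ∫ t in (0 : ℝ)..1, exp (-(2 * π * I * m * t)) * (exp (-(α * I * t)) * g t) =
      1 / (((α + 2 * π * m : ℝ) : ℂ) ^ 2 - z) := by
  set k : ℂ := ((α + 2 * π * m : ℝ) : ℂ)
  have hint (t : ℝ) : exp (-(2 * π * I * m * t)) * (exp (-(α * I * t)) * g t) =
      g t * exp (-(k * I * t)) := by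
    rw [← mul_assoc, ← exp_add, mul_comm]
    congr 2
    push_cast [k]
    ring
  have hk1 : exp (-(k * I * (1 : ℝ))) = exp (-(α * I)) := by
    have : -(k * I * (1 : ℝ)) = -(α * I) + (-m : ℤ) * (2 * π * I) := by push_cast [k]; ring
    rw [this, exp_add, exp_int_mul_two_pi_mul_I, mul_one]
  simp_rw [hint]
  rw [integral_mul_exp_of_hasDerivAt hg hg' hm, hk1]
  congr 1
  simp only [ofReal_zero, mul_zero, neg_zero, exp_zero, mul_one]
  linear_combination hg'1 + I * k * hg1

theorem hasSum_intervalIntegral_exp_mul_of_summable {f : ℝ → ℂ}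
    (hf : ContinuousOn f (Set.Icc 0 1)) (hf01 : f 0 = f 1)
    (hs : Summable fun m : ℤ => ∫ t in (0 : ℝ)..1, exp (-(2 * π * I * m * t)) * f t) :
    HasSum (fun m : ℤ => ∫ t in (0 : ℝ)..1, exp (-(2 * π * I * m * t)) * f t) (f 0) := by
  have : Fact ((0 : ℝ) < 1) := ⟨one_pos⟩
  let F : C(AddCircle (1 : ℝ), ℂ) :=
    ⟨AddCircle.liftIco 1 0 f, AddCircle.liftIco_zero_continuous hf01 hf⟩
  have hcoeff : fourierCoeff F =
      fun m : ℤ => ∫ t in (0 : ℝ)..1, exp (-(2 * π * I * m * t)) * f t := by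
    ext m
    rw [ContinuousMap.coe_mk, fourierCoeff_liftIco_eq, fourierCoeffOn_eq_integral]
    simp [← exp_conj, map_ofNat]
  have hF0 : F 0 = f 0 := AddCircle.liftIco_zero_coe_apply (p := (1 : ℝ)) (x := 0) (by simp)
  have := has_pointwise_sum_fourier_series_of_summable (hcoeff ▸ hs) (0 : AddCircle (1 : ℝ))
  simpa [hcoeff, hF0] using this

theorem hasSum_one_div_sq_sub_of_twisted_boundary {g g' : ℝ → ℂ} {z : ℂ} {α : ℝ}
    (hg : ∀ t, HasDerivAt g (g' t) t) (hg' : ∀ t, HasDerivAt g' (-z * g t) t)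
    (hg1 : exp (-(α * I)) * g 1 = g 0) (hg'1 : exp (-(α * I)) * g' 1 - g' 0 = 1)
    (hz : ∀ m : ℤ, ((α + 2 * π * m : ℝ) : ℂ) ^ 2 ≠ z) :
    HasSum (fun m : ℤ => 1 / (((α + 2 * π * m : ℝ) : ℂ) ^ 2 - z)) (g 0) := by
  have hcoeff (m : ℤ) := integral_exp_mul_exp_mul_of_twisted_boundary hg hg' hg1 hg'1 (hz m)
  have hcont : Continuous g := continuous_iff_continuousAt.mpr fun t => (hg t).continuousAt
  have hsummable : Summable fun m : ℤ =>
      ∫ t in (0 : ℝ)..1, exp (-(2 * π * I * m * t)) * (exp (-(α * I * t)) * g t) := by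
    simp_rw [hcoeff]
    exact (summable_norm_one_div_sq_sub α (2 * π) (by positivity) z).of_norm
  simpa [hcoeff] using
    hasSum_intervalIntegral_exp_mul_of_summable (by fun_prop) (by simpa using hg1.symm) hsummable

theorem stmt_2 (α : ℝ) (lam : ℂ)
    (h : ∀ m : ℤ, lam ≠ (((α + 2 * Real.pi * m : ℝ) : ℂ)) ^ 2) :
    cf lam ≠ Complex.cos (α : ℂ) ∧
    Summable (fun m : ℤ => ‖1 / ((((α + 2 * Real.pi * m : ℝ) : ℂ)) ^ 2 - lam)‖) ∧
    ∑' m : ℤ, 1 / ((((α + 2 * Real.pi * m : ℝ) : ℂ)) ^ 2 - lam)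
      = sf lam / 2 * (1 / (cf lam - Complex.cos (α : ℂ))) := by
  set ω := lam ^ ((1 : ℂ) / 2)
  have hω : ω ^ 2 = lam := by simp [ω]
  have hsf : sf lam = sinDiv ω 1 := by
    rcases eq_or_ne lam 0 with h0 | h0
    · simp [sf, sinDiv, ω, h0, zero_cpow]
    · have hω0 : ω ≠ 0 := by rintro h'; simp [← hω, h'] at h0
      rw [sf, if_neg h0, sinDiv, if_neg hω0, ofReal_one, mul_one]
  have hc : cos ω ≠ cos α := cos_ne_cos_of_forall_sq_ne (hω ▸ h)
  obtain ⟨g, g', hg, hg', hg1, hg'1, hg0⟩ := exists_twisted_boundary_solution ω α hc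
  rw [hω] at hg'
  refine ⟨hc, summable_norm_one_div_sq_sub α (2 * π) (by positivity) lam, ?_⟩
  rw [(hasSum_one_div_sq_sub_of_twisted_boundary hg hg' hg1 hg'1 fun m => (h m).symm).tsum_eq,
    hg0, hsf, show cf lam = cos ω from rfl, mul_one_div, div_div]
end

section
/- Let δ_B, δ_R > 0 be real. For x > 0 define t(x) = cosh²(√x)·(1 + 1/(δ_B δ_R)) + sinh²(√x)·(1/δ_R + 1/δ_B) and μ⁺(x) = t(x)/2 + √(t(x)²/4 − 1/(δ_B δ_R)) (real square root; the radicand is positive for x > 0). Then e^{−2√x}·μ⁺(x) → ((δ_R + 1)/(2δ_R))·((δ_B + 1)/(2δ_B)) as x → ∞. -/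
noncomputable def Faux (a b D : ℝ) (w : ℝ) : ℝ :=
  (((1 + w) / 2) ^ 2 * a + ((1 - w) / 2) ^ 2 * b) / 2 +
    Real.sqrt ((((1 + w) / 2) ^ 2 * a + ((1 - w) / 2) ^ 2 * b) ^ 2 / 4 - w ^ 2 * D)

lemma Faux_cont (a b D : ℝ) : Continuous (Faux a b D) := by
  unfold Faux
  exact (by continuity : Continuous fun w : ℝ => (((1 + w) / 2) ^ 2 * a + ((1 - w) / 2) ^ 2 * b) / 2).add
    (Real.continuous_sqrt.comp (by continuity))

lemma Faux_zero (a b D : ℝ) (hab : 0 ≤ a + b) : Faux a b D 0 = (a + b) / 4 := by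
  unfold Faux
  rw [show (((1 + (0:ℝ)) / 2) ^ 2 * a + ((1 - (0:ℝ)) / 2) ^ 2 * b) ^ 2 / 4 - (0:ℝ) ^ 2 * D
      = ((a + b) / 8) ^ 2 by ring,
    Real.sqrt_sq (by linarith)]
  ring

lemma Faux_eq (a b D : ℝ) (u : ℝ) :
    Real.exp (-2 * u) *
      ((Real.cosh u ^ 2 * a + Real.sinh u ^ 2 * b) / 2 +
        Real.sqrt ((Real.cosh u ^ 2 * a + Real.sinh u ^ 2 * b) ^ 2 / 4 - D))
    = Faux a b D (Real.exp (-2 * u)) := by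
  have hu : Real.exp u ≠ 0 := (Real.exp_pos u).ne'
  have e1 : Real.exp (-u) = (Real.exp u)⁻¹ := Real.exp_neg u
  have e2 : Real.exp (-2 * u) = (Real.exp u * Real.exp u)⁻¹ := by
    rw [← Real.exp_add, ← Real.exp_neg]; ring_nf
  have h1 : Real.exp (-2 * u) * Real.cosh u ^ 2 = ((1 + Real.exp (-2 * u)) / 2) ^ 2 := by
    rw [Real.cosh_eq, e1, e2]; field_simp
  have h2 : Real.exp (-2 * u) * Real.sinh u ^ 2 = ((1 - Real.exp (-2 * u)) / 2) ^ 2 := by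
    linear_combination h1 - Real.exp (-2 * u) * Real.cosh_sq_sub_sinh_sq u
  have hs : Real.exp (-2 * u) *
      Real.sqrt ((Real.cosh u ^ 2 * a + Real.sinh u ^ 2 * b) ^ 2 / 4 - D)
      = Real.sqrt (Real.exp (-2 * u) ^ 2 *
          ((Real.cosh u ^ 2 * a + Real.sinh u ^ 2 * b) ^ 2 / 4 - D)) := by
    rw [Real.sqrt_mul (sq_nonneg _), Real.sqrt_sq (Real.exp_pos _).le]
  have hin : Real.exp (-2 * u) ^ 2 *
      ((Real.cosh u ^ 2 * a + Real.sinh u ^ 2 * b) ^ 2 / 4 - D)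
      = (Real.exp (-2 * u) * Real.cosh u ^ 2 * a + Real.exp (-2 * u) * Real.sinh u ^ 2 * b) ^ 2 / 4
        - Real.exp (-2 * u) ^ 2 * D := by ring
  unfold Faux
  rw [mul_add, hs, hin, h1, h2]
  linear_combination (a / 2) * h1 + (b / 2) * h2

theorem stmt_7 (dB dR : ℝ) (hB : 0 < dB) (hR : 0 < dR) :
    Filter.Tendsto
      (fun x : ℝ =>
        Real.exp (-2 * Real.sqrt x) *
          ((Real.cosh (Real.sqrt x) ^ 2 * (1 + 1 / (dB * dR)) +
              Real.sinh (Real.sqrt x) ^ 2 * (1 / dR + 1 / dB)) / 2 +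
            Real.sqrt
              ((Real.cosh (Real.sqrt x) ^ 2 * (1 + 1 / (dB * dR)) +
                  Real.sinh (Real.sqrt x) ^ 2 * (1 / dR + 1 / dB)) ^ 2 / 4 - 1 / (dB * dR))))
      Filter.atTop
      (nhds ((dR + 1) / (2 * dR) * ((dB + 1) / (2 * dB)))) := by
  set a : ℝ := 1 + 1 / (dB * dR) with ha
  set b : ℝ := 1 / dR + 1 / dB with hb
  set D : ℝ := 1 / (dB * dR) with hD
  have hab : 0 ≤ a + b := by
    have : 0 < dB * dR := mul_pos hB hR
    rw [ha, hb]; positivity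
  have hval : (dR + 1) / (2 * dR) * ((dB + 1) / (2 * dB)) = (a + b) / 4 := by
    have h1 : dB ≠ 0 := hB.ne'
    have h2 : dR ≠ 0 := hR.ne'
    rw [ha, hb, hD]; field_simp; ring
  rw [hval]
  have hw : Filter.Tendsto (fun x : ℝ => Real.exp (-2 * Real.sqrt x)) Filter.atTop (nhds 0) := by
    apply Real.tendsto_exp_atBot.comp
    have hsq : Filter.Tendsto Real.sqrt Filter.atTop Filter.atTop := by
      apply Filter.tendsto_atTop_atTop.mpr
      intro c
      exact ⟨c ^ 2, fun x hx => by
        calc c ≤ Real.sqrt (c ^ 2) := by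
              rcases le_total c 0 with h | h
              · exact h.trans (Real.sqrt_nonneg _)
              · rw [Real.sqrt_sq h]
          _ ≤ Real.sqrt x := Real.sqrt_le_sqrt hx⟩
    have : Filter.Tendsto (fun u : ℝ => -2 * u) Filter.atTop Filter.atBot := by
      apply Filter.tendsto_atTop_atBot.mpr
      intro c
      exact ⟨-c / 2, fun x hx => by linarith⟩
    exact this.comp hsq
  have hF : Filter.Tendsto (Faux a b D) (nhds 0) (nhds ((a + b) / 4)) := by
    rw [← Faux_zero a b D hab]
    exact (Faux_cont a b D).tendsto 0
  have := hF.comp hw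
  refine this.congr fun x => ?_
  exact (Faux_eq a b D (Real.sqrt x)).symm
end

section
/- Let δ_B, δ_R > 0 be real. For x > 0 define t(x) = cosh²(√x)·(1 + 1/(δ_B δ_R)) + sinh²(√x)·(1/δ_R + 1/δ_B) and μ⁻(x) = t(x)/2 − √(t(x)²/4 − 1/(δ_B δ_R)) (real square root; the radicand is positive for x > 0). Then e^{2√x}·μ⁻(x) → (2/(δ_R + 1))·(2/(δ_B + 1)) as x → ∞. -/
open Real Filter

private lemma aux_mu (d a : ℝ) (hd0 : 0 < d) (ha0 : 0 < a) :
    Tendsto (fun u : ℝ =>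
      Real.exp (2 * u) *
        ((Real.cosh u ^ 2 * (1 + d) + Real.sinh u ^ 2 * a) / 2 -
          Real.sqrt ((Real.cosh u ^ 2 * (1 + d) + Real.sinh u ^ 2 * a) ^ 2 / 4 - d)))
      atTop (nhds (d / ((1 + d + a) / 4))) := by
  set S : ℝ → ℝ := fun u => Real.cosh u ^ 2 * (1 + d) + Real.sinh u ^ 2 * a with hSdef
  have hS_lb : ∀ u, 1 + d ≤ S u := by
    intro u
    simp only [hSdef]
    have h1 : 1 ≤ Real.cosh u := Real.one_le_cosh u
    have h2 : 0 ≤ Real.sinh u ^ 2 := sq_nonneg _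
    have h3 : 0 ≤ (Real.cosh u ^ 2 - 1) * (1 + d) :=
      mul_nonneg (by nlinarith) (by linarith)
    nlinarith [mul_nonneg h2 ha0.le]
  have hSexp : ∀ u : ℝ, Real.exp (-(2 * u)) * S u =
      ((1 + Real.exp (-(2 * u))) / 2) ^ 2 * (1 + d) +
        ((1 - Real.exp (-(2 * u))) / 2) ^ 2 * a := by
    intro u
    have h1 : Real.exp (-u) * Real.exp u = 1 := by rw [← Real.exp_add]; simp
    have h2 : Real.exp (-(2 * u)) = Real.exp (-u) * Real.exp (-u) := by
      rw [← Real.exp_add]; ring_nf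
    simp only [hSdef, Real.cosh_eq, Real.sinh_eq, h2]
    linear_combination ((1 + d) / 4 * (Real.exp u * Real.exp (-u) + 1 + 2 * Real.exp (-u) ^ 2)
      + a / 4 * (Real.exp u * Real.exp (-u) + 1 - 2 * Real.exp (-u) ^ 2)) * h1
  clear_value S
  set c : ℝ := (1 + d + a) / 4 with hc
  have hc0 : 0 < c := by positivity
  have hrad : ∀ u, 0 ≤ S u ^ 2 / 4 - d := by
    intro u
    have h := hS_lb u
    have h2 : (1 + d) ^ 2 ≤ S u ^ 2 := by nlinarith
    nlinarith [sq_nonneg (1 - d)]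
  have hSpos : ∀ u, 0 < S u := fun u => lt_of_lt_of_le (by linarith) (hS_lb u)
  have hden : ∀ u, 0 < S u / 2 + Real.sqrt (S u ^ 2 / 4 - d) := by
    intro u
    have h1 := Real.sqrt_nonneg (S u ^ 2 / 4 - d)
    have h2 := hSpos u
    linarith
  have hE : Tendsto (fun u : ℝ => Real.exp (-(2 * u))) atTop (nhds 0) := by
    apply Real.tendsto_exp_atBot.comp
    exact (tendsto_neg_atBot_iff.mpr (tendsto_id.const_mul_atTop two_pos))
  have hA : Tendsto (fun u : ℝ => Real.exp (-(2 * u)) * S u) atTop (nhds c) := by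
    have hcont : Tendsto (fun E : ℝ => ((1 + E) / 2) ^ 2 * (1 + d) + ((1 - E) / 2) ^ 2 * a)
        (nhds 0) (nhds c) := by
      have hC : Continuous
          (fun E : ℝ => ((1 + E) / 2) ^ 2 * (1 + d) + ((1 - E) / 2) ^ 2 * a) := by
        continuity
      have h0 := hC.tendsto 0
      have hv : ((1 + (0:ℝ)) / 2) ^ 2 * (1 + d) + ((1 - (0:ℝ)) / 2) ^ 2 * a = c := by
        rw [hc]; ring
      rwa [hv] at h0
    exact (hcont.comp hE).congr fun u => (hSexp u).symm
  have hG : Tendsto (fun u : ℝ =>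
      Real.exp (-(2 * u)) * (S u / 2 + Real.sqrt (S u ^ 2 / 4 - d))) atTop (nhds c) := by
    have hfun : ∀ u : ℝ, Real.exp (-(2 * u)) * (S u / 2 + Real.sqrt (S u ^ 2 / 4 - d)) =
        Real.exp (-(2 * u)) * S u / 2 +
          Real.sqrt ((Real.exp (-(2 * u)) * S u) ^ 2 / 4 - d * Real.exp (-(2 * u)) ^ 2) := by
      intro u
      have hEpos : (0:ℝ) < Real.exp (-(2 * u)) := Real.exp_pos _
      have hsq : Real.exp (-(2 * u)) * Real.sqrt (S u ^ 2 / 4 - d) =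
          Real.sqrt (Real.exp (-(2 * u)) ^ 2 * (S u ^ 2 / 4 - d)) := by
        rw [Real.sqrt_mul (sq_nonneg _), Real.sqrt_sq hEpos.le]
      have harg : Real.exp (-(2 * u)) ^ 2 * (S u ^ 2 / 4 - d) =
          (Real.exp (-(2 * u)) * S u) ^ 2 / 4 - d * Real.exp (-(2 * u)) ^ 2 := by ring
      rw [mul_add, hsq, harg, mul_div_assoc]
    have h1 : Tendsto (fun u : ℝ => Real.exp (-(2 * u)) * S u / 2) atTop (nhds (c / 2)) :=
      hA.div_const 2
    have hr : Tendsto (fun u : ℝ =>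
        (Real.exp (-(2 * u)) * S u) ^ 2 / 4 - d * Real.exp (-(2 * u)) ^ 2)
        atTop (nhds (c ^ 2 / 4)) := by
      have := ((hA.pow 2).div_const 4).sub ((hE.pow 2).const_mul d)
      simpa using this
    have h2 : Tendsto (fun u : ℝ =>
        Real.sqrt ((Real.exp (-(2 * u)) * S u) ^ 2 / 4 - d * Real.exp (-(2 * u)) ^ 2))
        atTop (nhds (c / 2)) := by
      have h3 := (Real.continuous_sqrt.tendsto (c ^ 2 / 4)).comp hr
      have hval : Real.sqrt (c ^ 2 / 4) = c / 2 := by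
        rw [show c ^ 2 / 4 = (c / 2) ^ 2 by ring, Real.sqrt_sq (by positivity)]
      rw [hval] at h3
      exact h3
    have h4 := h1.add h2
    rw [add_halves] at h4
    exact h4.congr fun u => (hfun u).symm
  have hkey : ∀ u : ℝ,
      Real.exp (2 * u) * (S u / 2 - Real.sqrt (S u ^ 2 / 4 - d)) =
        d / (Real.exp (-(2 * u)) * (S u / 2 + Real.sqrt (S u ^ 2 / 4 - d))) := by
    intro u
    have hEne : Real.exp (-(2 * u)) ≠ 0 := (Real.exp_pos _).ne'
    have hsq : Real.sqrt (S u ^ 2 / 4 - d) ^ 2 = S u ^ 2 / 4 - d := Real.sq_sqrt (hrad u)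
    have hprod : (S u / 2 - Real.sqrt (S u ^ 2 / 4 - d)) *
        (S u / 2 + Real.sqrt (S u ^ 2 / 4 - d)) = d := by
      linear_combination -hsq
    have hdenne : (S u / 2 + Real.sqrt (S u ^ 2 / 4 - d)) ≠ 0 := (hden u).ne'
    have hexp : Real.exp (2 * u) = (Real.exp (-(2 * u)))⁻¹ := by
      rw [← Real.exp_neg]; ring_nf
    rw [hexp, eq_div_iff (mul_ne_zero hEne hdenne)]
    calc (Real.exp (-(2 * u)))⁻¹ * (S u / 2 - Real.sqrt (S u ^ 2 / 4 - d)) *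
          (Real.exp (-(2 * u)) * (S u / 2 + Real.sqrt (S u ^ 2 / 4 - d)))
        = ((Real.exp (-(2 * u)))⁻¹ * Real.exp (-(2 * u))) *
            ((S u / 2 - Real.sqrt (S u ^ 2 / 4 - d)) *
              (S u / 2 + Real.sqrt (S u ^ 2 / 4 - d))) := by ring
      _ = d := by rw [inv_mul_cancel₀ hEne, hprod, one_mul]
  have hfinal := (tendsto_const_nhds :
      Tendsto (fun _ : ℝ => d) atTop (nhds d)).div hG hc0.ne'
  refine hfinal.congr fun u => ?_
  simp only [Pi.div_apply]
  have hSu : S u = Real.cosh u ^ 2 * (1 + d) + Real.sinh u ^ 2 * a := by rw [hSdef]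
  rw [← hSu]
  exact (hkey u).symm

theorem stmt_8 (dB dR : ℝ) (hB : 0 < dB) (hR : 0 < dR) :
    Filter.Tendsto
      (fun x : ℝ =>
        Real.exp (2 * Real.sqrt x) *
          ((Real.cosh (Real.sqrt x) ^ 2 * (1 + 1 / (dB * dR)) +
              Real.sinh (Real.sqrt x) ^ 2 * (1 / dR + 1 / dB)) / 2 -
            Real.sqrt
              ((Real.cosh (Real.sqrt x) ^ 2 * (1 + 1 / (dB * dR)) +
                  Real.sinh (Real.sqrt x) ^ 2 * (1 / dR + 1 / dB)) ^ 2 / 4 - 1 / (dB * dR))))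
      Filter.atTop
      (nhds (2 / (dR + 1) * (2 / (dB + 1)))) := by
  have hd0 : 0 < 1 / (dB * dR) := by positivity
  have ha0 : 0 < 1 / dR + 1 / dB := by positivity
  have haux := aux_mu (1 / (dB * dR)) (1 / dR + 1 / dB) hd0 ha0
  have hsqrt : Tendsto Real.sqrt atTop atTop := by
    rw [tendsto_atTop_atTop]
    intro b
    refine ⟨(max b 0) ^ 2, fun x hx => ?_⟩
    have h1 : max b 0 ≤ Real.sqrt x := by
      rw [show max b 0 = Real.sqrt ((max b 0) ^ 2) by
        rw [Real.sqrt_sq (le_max_right b 0)]]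
      exact Real.sqrt_le_sqrt hx
    exact le_trans (le_max_left b 0) h1
  have hval : (1 / (dB * dR)) / ((1 + 1 / (dB * dR) + (1 / dR + 1 / dB)) / 4) =
      2 / (dR + 1) * (2 / (dB + 1)) := by
    field_simp
    ring
  rw [hval] at haux
  exact haux.comp hsqrt
end

section
/- Let δ_R, δ_B be positive integers, let λ ∈ ℂ, and suppose z ∈ ℂ satisfies z² − tr T₀(λ)·z + 1/(δ_R δ_B) = 0 and |z| = (δ_R δ_B)^{−1/2}. Then λ is real and λ ≥ 0. -/
/-- The edge propagation matrix `M(λ)`; note `c'(λ) = -λ·s(λ)` and `s'(λ) = c(λ)`. -/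
noncomputable def Mmat (lam : ℂ) : Matrix (Fin 2) (Fin 2) ℂ :=
  !![cf lam, sf lam; -lam * sf lam, cf lam]

/-- The jump matrix `J_δ = diag(1, 1/δ)`. -/
noncomputable def Jmat (d : ℝ) : Matrix (Fin 2) (Fin 2) ℂ := !![1, 0; 0, 1 / (d : ℂ)]

/-- The transition matrix `T₀(λ) = J_R · M(λ) · J_B · M(λ)`. -/
noncomputable def T0 (dR dB : ℝ) (lam : ℂ) : Matrix (Fin 2) (Fin 2) ℂ :=
  Jmat dR * Mmat lam * Jmat dB * Mmat lam

/-!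
If `z` is a multiplier with `|z|² = det T₀ = 1/(δ_R δ_B)`, the other multiplier is `z̄`, so
`tr T₀(λ) = 2 Re z` is real with `|tr T₀(λ)| ≤ 2/√(δ_R δ_B)`. With `ω² = λ`, the trace is an affine
function of `cos 2ω`, and AM–GM turns that bound into `cos 2ω ∈ [-1, 1]`. A complex number whose
cosine is real and lies in `[-1, 1]` is real (it equals `± arccos + 2πk`), so `ω` is real and
`λ = ω² ≥ 0`.
-/

open Complex ComplexConjugate

lemma Complex.im_eq_zero_of_cos_eq_ofReal {w : ℂ} {t : ℝ} (h : cos w = t) (ht : |t| ≤ 1) :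
    w.im = 0 := by
  have hcos : cos (Real.arccos t : ℂ) = cos w := by
    rw [← ofReal_cos, Real.cos_arccos (abs_le.mp ht).1 (abs_le.mp ht).2, h]
  obtain ⟨k, hw | hw⟩ := cos_eq_cos_iff.mp hcos <;> simp [hw]

lemma Complex.cpow_one_half_sq (x : ℂ) : (x ^ (1 / 2 : ℂ)) ^ 2 = x := by
  rw [one_div]
  exact cpow_ofNat_inv_pow x 2

lemma mul_sf_sq (lam : ℂ) : lam * sf lam ^ 2 = sin (lam ^ (1 / 2 : ℂ)) ^ 2 := by
  by_cases hlam : lam = 0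
  · simp [hlam, zero_cpow]
  · have hω0 : lam ^ (1 / 2 : ℂ) ≠ 0 := fun h0 => hlam (by rw [← cpow_one_half_sq lam, h0]; ring)
    rw [sf, if_neg hlam]
    field_simp
    rw [cpow_one_half_sq]

lemma trace_T0 (dR dB : ℝ) (lam : ℂ) :
    (T0 dR dB lam).trace =
      cos (lam ^ (1 / 2 : ℂ)) ^ 2 * (1 + 1 / (dR * dB)) -
        sin (lam ^ (1 / 2 : ℂ)) ^ 2 * (1 / dR + 1 / dB) := by
  rw [← mul_sf_sq]
  simp only [T0, Mmat, Jmat, cf, Matrix.trace_fin_two, Matrix.mul_apply, Fin.sum_univ_two]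
  simp
  ring

lemma two_mul_trace_T0_eq (dR dB : ℝ) (lam : ℂ) :
    2 * (T0 dR dB lam).trace =
      ((1 + 1 / (dR * dB)) + (1 / dR + 1 / dB)) * cos (2 * lam ^ (1 / 2 : ℂ)) +
        (1 + 1 / (dR * dB)) - (1 / dR + 1 / dB) := by
  rw [trace_T0, cos_two_mul]
  linear_combination (-2 * (1 / (dR:ℂ) + 1 / dB)) * sin_sq_add_cos_sq (lam ^ (1 / 2 : ℂ))

lemma Complex.eq_add_conj_of_sq_sub_mul_add_normSq_eq_zero {z f : ℂ} (hz : z ≠ 0)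
    (h : z ^ 2 - f * z + normSq z = 0) : f = z + conj z := by
  rw [← mul_conj] at h
  exact (mul_right_cancel₀ hz (by linear_combination h)).symm

lemma two_div_sqrt_le_one_add_inv {D : ℝ} (hD : 0 < D) : 2 / √D ≤ 1 + 1 / D := by
  have : 1 / D = (1 / √D) ^ 2 := by rw [div_pow, Real.sq_sqrt hD.le, one_pow]
  rw [this, div_eq_mul_one_div 2]
  nlinarith [sq_nonneg (1 - 1 / √D)]

lemma two_div_sqrt_mul_le_inv_add_inv {x y : ℝ} (hx : 0 < x) (hy : 0 < y) :
    2 / √(x * y) ≤ 1 / x + 1 / y := by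
  have hx' : 1 / x = (1 / √x) ^ 2 := by rw [div_pow, Real.sq_sqrt hx.le, one_pow]
  have hy' : 1 / y = (1 / √y) ^ 2 := by rw [div_pow, Real.sq_sqrt hy.le, one_pow]
  rw [Real.sqrt_mul hx.le, hx', hy', div_mul_eq_div_div]
  have : 2 / √x / √y = 2 * (1 / √x) * (1 / √y) := by ring
  rw [this]
  nlinarith [sq_nonneg (1 / √x - 1 / √y)]

lemma abs_two_mul_sub_add_div_le_one {a b f : ℝ} (hab : 0 < a + b) (hfb : -b ≤ f) (hfa : f ≤ a) :
    |(2 * f - a + b) / (a + b)| ≤ 1 := by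
  rw [abs_div, abs_of_pos hab, div_le_one hab, abs_le]
  constructor <;> linarith

lemma Complex.im_eq_zero_and_re_nonneg_of_im_cpow_half_eq_zero {lam : ℂ}
    (h : (lam ^ (1 / 2 : ℂ)).im = 0) : lam.im = 0 ∧ 0 ≤ lam.re := by
  rw [← cpow_one_half_sq lam, sq, mul_im, mul_re, h]
  simpa using mul_self_nonneg _

theorem stmt_9 (dR dB : ℕ) (hR : 0 < dR) (hB : 0 < dB) (lam z : ℂ)
    (hroot : z ^ 2 - (T0 (dR : ℝ) (dB : ℝ) lam).trace * z + 1 / ((dR : ℂ) * dB) = 0)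
    (habs : ‖z‖ = 1 / Real.sqrt ((dR : ℝ) * dB)) :
    lam.im = 0 ∧ 0 ≤ lam.re := by
  have hR' : (0 : ℝ) < dR := Nat.cast_pos.mpr hR
  have hB' : (0 : ℝ) < dB := Nat.cast_pos.mpr hB
  have hD : (0 : ℝ) < dR * dB := mul_pos hR' hB'
  have hz : z ≠ 0 := norm_ne_zero_iff.mp (by rw [habs]; positivity)
  have hnormSq : (normSq z : ℂ) = 1 / ((dR : ℂ) * dB) := by
    rw [normSq_eq_norm_sq, habs, div_pow, Real.sq_sqrt hD.le]
    push_cast; ring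
  have htrace : (T0 dR dB lam).trace = (2 * z.re : ℝ) := by
    rw [eq_add_conj_of_sq_sub_mul_add_normSq_eq_zero hz (f := (T0 dR dB lam).trace)
      (by rwa [hnormSq]), add_conj]
  have hre : |2 * z.re| ≤ 2 / √(dR * dB) := by
    have := (abs_re_le_norm z).trans_eq habs
    rw [abs_mul, abs_two, ← mul_one_div]
    linarith
  set a : ℝ := 1 + 1 / (dR * dB)
  set b : ℝ := 1 / dR + 1 / dB
  have hab : 0 < a + b := by positivity
  have hcos : cos (2 * lam ^ (1 / 2 : ℂ)) = ((2 * (2 * z.re) - a + b) / (a + b) : ℝ) := by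
    have := two_mul_trace_T0_eq dR dB lam
    rw [htrace] at this
    have hab' : ((a + b : ℝ) : ℂ) ≠ 0 := ofReal_ne_zero.mpr hab.ne'
    rw [ofReal_div, eq_div_iff hab']
    simp only [a, b] at hab' ⊢
    push_cast at this hab' ⊢
    linear_combination -this
  have hω := im_eq_zero_of_cos_eq_ofReal hcos <| abs_two_mul_sub_add_div_le_one hab
    (by linarith [(abs_le.mp hre).1, two_div_sqrt_mul_le_inv_add_inv hR' hB'])
    (by linarith [(abs_le.mp hre).2, two_div_sqrt_le_one_add_inv hD])
  exact im_eq_zero_and_re_nonneg_of_im_cpow_half_eq_zero (by simpa using hω)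
end
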